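/- Soundness of the non-recursive expansion algorithm: if at some iteration the conjunction ⋀_{α ∈ A} φ^α is unsatisfiable for the current set A of universal assignments, then the QBF Π.φ is false; if the conjunction ⋀_{σ ∈ S} ¬φ^σ is unsatisfiable for the current set S of existential assignments, then Π.φ is true. -/

import Mathlib

namespace QBF

/-- Semantics of a prenex QBF: prefix given by `q : Fin n → Bool`
(`true` = universally quantified, `false` = existentially quantified),
matrix `φ : (Fin n → Bool) → Bool`. -/
def Qeval : (n : ℕ) → (Fin n → Bool) → ((Fin n → Bool) → Bool) → Prop
  | 0, _, φ => φ (fun i => i.elim0) = true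
  | (n+1), q, φ =>
      if q 0 = true then
        ∀ b : Bool, Qeval n (fun i => q i.succ) (fun τ => φ (Fin.cons b τ))
      else
        ∃ b : Bool, Qeval n (fun i => q i.succ) (fun τ => φ (Fin.cons b τ))

/-- Full assignments of the universal variables. -/
def UA (n : ℕ) (q : Fin n → Bool) := {i : Fin n // q i = true} → Bool

/-- Full assignments of the existential variables. -/
def EA (n : ℕ) (q : Fin n → Bool) := {i : Fin n // q i = false} → Bool

/-- Annotated variables: a variable together with an annotation recording
(partial) values of the prefix-preceding variables of the other kind. -/
def Ann (n : ℕ) := Fin n × (Fin n → Option Bool)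

/-- Annotation of variable `j` by the values of `α` on the universal
variables preceding `j` in the prefix. -/
def annU {n : ℕ} (q : Fin n → Bool) (α : UA n q) (j : Fin n) : Fin n → Option Bool :=
  fun i => if h : q i = true ∧ i < j then some (α ⟨i, h.1⟩) else none

/-- Annotation of variable `j` by the values of `σ` on the existential
variables preceding `j` in the prefix. -/
def annE {n : ℕ} (q : Fin n → Bool) (σ : EA n q) (j : Fin n) : Fin n → Option Bool :=
  fun i => if h : q i = false ∧ i < j then some (σ ⟨i, h.1⟩) else none

/-- The assignment realizing the instantiation `φ^α`: universal variables get
their `α`-values, existential variables get the value `τ` assigns to the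
corresponding annotated copy. -/
def combA {n : ℕ} (q : Fin n → Bool) (α : UA n q) (τ : Ann n → Bool) : Fin n → Bool :=
  fun i => if h : q i = true then α ⟨i, h⟩ else τ (i, annU q α i)

/-- The assignment realizing the instantiation `φ^σ`: existential variables get
their `σ`-values, universal variables get the value `ρ` assigns to the
corresponding annotated copy. -/
def combS {n : ℕ} (q : Fin n → Bool) (σ : EA n q) (ρ : Ann n → Bool) : Fin n → Bool :=
  fun i => if h : q i = false then σ ⟨i, h⟩ else ρ (i, annE q σ i)

/-- De-annotation `(τ|_{E^α})^{-α}` of an assignment of the annotated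
existential variables. -/
def extrE {n : ℕ} (q : Fin n → Bool) (α : UA n q) (τ : Ann n → Bool) : EA n q :=
  fun j => τ (j.1, annU q α j.1)

/-- De-annotation `(ρ|_{U^σ})^{-σ}` of an assignment of the annotated
universal variables. -/
def extrU {n : ℕ} (q : Fin n → Bool) (σ : EA n q) (ρ : Ann n → Bool) : UA n q :=
  fun j => ρ (j.1, annE q σ j.1)

/-- The combined assignment `ασ`. -/
def merge {n : ℕ} (q : Fin n → Bool) (α : UA n q) (σ : EA n q) : Fin n → Bool :=
  fun i => if h : q i = true then α ⟨i, h⟩ else σ ⟨i, by simpa using h⟩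
/-- Restriction of a universal assignment to the tail prefix. -/
def tailU {n : ℕ} {q : Fin (n+1) → Bool} (α : UA (n+1) q) : UA n (fun i => q i.succ) :=
  fun k => α ⟨k.1.succ, k.2⟩

/-- Restriction of an existential assignment to the tail prefix. -/
def tailE {n : ℕ} {q : Fin (n+1) → Bool} (σ : EA (n+1) q) : EA n (fun i => q i.succ) :=
  fun k => σ ⟨k.1.succ, k.2⟩

lemma annU_succ {n : ℕ} (q : Fin (n+1) → Bool) (α : UA (n+1) q) (i : Fin n) :
    (fun k => annU q α i.succ k.succ) = annU (fun j => q j.succ) (tailU α) i := by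
  funext k
  simp only [annU, Fin.succ_lt_succ_iff]
  rfl

lemma annE_succ {n : ℕ} (q : Fin (n+1) → Bool) (σ : EA (n+1) q) (i : Fin n) :
    (fun k => annE q σ i.succ k.succ) = annE (fun j => q j.succ) (tailE σ) i := by
  funext k
  simp only [annE, Fin.succ_lt_succ_iff]
  rfl

lemma lemA : ∀ (n : ℕ) (q : Fin n → Bool) (φ : (Fin n → Bool) → Bool),
    Qeval n q φ → ∃ τ : Ann n → Bool, ∀ α : UA n q, φ (combA q α τ) = true := by
  intro n
  induction n with
  | zero =>
    intro q φ h
    refine ⟨fun _ => true, fun α => ?_⟩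
    have e : combA q α (fun _ => true) = (fun i => i.elim0) := funext fun i => i.elim0
    rw [e]; exact h
  | succ n ih =>
    intro q φ h
    by_cases h0 : q 0 = true
    · rw [Qeval, if_pos h0] at h
      choose τf hτf using fun b => ih _ _ (h b)
      set τ : Ann (n+1) → Bool := fun p => Fin.cases (motive := fun _ => Bool) true
        (fun i => (p.2 0).elim true (fun b => τf b (i, fun k => p.2 k.succ))) p.1 with hτ
      refine ⟨τ, fun α => ?_⟩
      set b := α ⟨0, h0⟩ with hb
      have key : combA q α τ =
          Fin.cons b (combA (fun j => q j.succ) (tailU α) (τf b)) := by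
        funext i
        refine Fin.cases ?_ (fun k => ?_) i
        · simp [combA, h0, hb]
        · by_cases hk : q k.succ = true
          · simp only [combA, dif_pos hk, Fin.cons_succ]
            rfl
          · simp only [combA, dif_neg hk, Fin.cons_succ, hτ, Fin.cases_succ]
            have hann0 : annU q α k.succ 0 = some b := by
              simp [annU, h0, Fin.succ_pos, hb]
            rw [hann0]
            show τf b (k, fun j => annU q α k.succ j.succ) = _
            rw [annU_succ]
      rw [key]
      exact hτf b (tailU α)
    · rw [Qeval, if_neg h0] at h
      obtain ⟨b, hb⟩ := h
      obtain ⟨τ0, hτ0⟩ := ih _ _ hb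
      set τ : Ann (n+1) → Bool := fun p => Fin.cases (motive := fun _ => Bool) b
        (fun i => τ0 (i, fun k => p.2 k.succ)) p.1 with hτ
      refine ⟨τ, fun α => ?_⟩
      have key : combA q α τ =
          Fin.cons b (combA (fun j => q j.succ) (tailU α) τ0) := by
        funext i
        refine Fin.cases ?_ (fun k => ?_) i
        · simp [combA, h0, hτ]
        · by_cases hk : q k.succ = true
          · simp only [combA, dif_pos hk, Fin.cons_succ]
            rfl
          · simp only [combA, dif_neg hk, Fin.cons_succ, hτ, Fin.cases_succ]
            show τ0 (k, fun j => annU q α k.succ j.succ) = _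
            rw [annU_succ]
      rw [key]
      exact hτ0 (tailU α)

lemma lemB : ∀ (n : ℕ) (q : Fin n → Bool) (φ : (Fin n → Bool) → Bool),
    ¬ Qeval n q φ → ∃ ρ : Ann n → Bool, ∀ σ : EA n q, φ (combS q σ ρ) = false := by
  intro n
  induction n with
  | zero =>
    intro q φ h
    refine ⟨fun _ => true, fun σ => ?_⟩
    have e : combS q σ (fun _ => true) = (fun i => i.elim0) := funext fun i => i.elim0
    rw [e]
    rw [Qeval] at h
    exact Bool.eq_false_iff.mpr (fun hh => h hh)
  | succ n ih =>
    intro q φ h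
    by_cases h0 : q 0 = true
    · rw [Qeval, if_pos h0] at h
      push_neg at h
      obtain ⟨b, hb⟩ := h
      obtain ⟨ρ0, hρ0⟩ := ih _ _ hb
      set ρ : Ann (n+1) → Bool := fun p => Fin.cases (motive := fun _ => Bool) b
        (fun i => ρ0 (i, fun k => p.2 k.succ)) p.1 with hρ
      refine ⟨ρ, fun σ => ?_⟩
      have key : combS q σ ρ =
          Fin.cons b (combS (fun j => q j.succ) (tailE σ) ρ0) := by
        funext i
        refine Fin.cases ?_ (fun k => ?_) i
        · have h0' : ¬ q 0 = false := by simp [h0]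
          simp [combS, h0', hρ]
        · by_cases hk : q k.succ = false
          · simp only [combS, dif_pos hk, Fin.cons_succ]
            rfl
          · simp only [combS, dif_neg hk, Fin.cons_succ, hρ, Fin.cases_succ]
            show ρ0 (k, fun j => annE q σ k.succ j.succ) = _
            rw [annE_succ]
      rw [key]
      exact hρ0 (tailE σ)
    · rw [Qeval, if_neg h0] at h
      push_neg at h
      choose ρf hρf using fun b => ih _ _ (h b)
      have h0' : q 0 = false := by simpa using h0
      set ρ : Ann (n+1) → Bool := fun p => Fin.cases (motive := fun _ => Bool) true
        (fun i => (p.2 0).elim true (fun b => ρf b (i, fun k => p.2 k.succ))) p.1 with hρ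
      refine ⟨ρ, fun σ => ?_⟩
      set b := σ ⟨0, h0'⟩ with hb
      have key : combS q σ ρ =
          Fin.cons b (combS (fun j => q j.succ) (tailE σ) (ρf b)) := by
        funext i
        refine Fin.cases ?_ (fun k => ?_) i
        · simp [combS, h0', hb]
        · by_cases hk : q k.succ = false
          · simp only [combS, dif_pos hk, Fin.cons_succ]
            rfl
          · simp only [combS, dif_neg hk, Fin.cons_succ, hρ, Fin.cases_succ]
            have hann0 : annE q σ k.succ 0 = some b := by
              simp [annE, h0', Fin.succ_pos, hb]
            rw [hann0]
            show ρf b (k, fun j => annE q σ k.succ j.succ) = _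
            rw [annE_succ]
      rw [key]
      exact hρf b (tailE σ)

/-- Soundness of the non-recursive expansion algorithm: if the conjunction
`⋀_{α ∈ A} φ^α` is unsatisfiable for the current set `A` of universal
assignments, the QBF `Π.φ` is false; if `⋀_{σ ∈ S} ¬φ^σ` is unsatisfiable for
the current set `S` of existential assignments, the QBF is true. -/
theorem stmt15 (n : ℕ) (q : Fin n → Bool) (φ : (Fin n → Bool) → Bool)
    (A : Set (UA n q)) (S : Set (EA n q)) :
    ((¬ ∃ τ : Ann n → Bool, ∀ α ∈ A, φ (combA q α τ) = true) →
      ¬ Qeval n q φ) ∧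
    ((¬ ∃ ρ : Ann n → Bool, ∀ σ ∈ S, φ (combS q σ ρ) = false) →
      Qeval n q φ) := by
  constructor
  · intro hns hq
    obtain ⟨τ, hτ⟩ := lemA n q φ hq
    exact hns ⟨τ, fun α _ => hτ α⟩
  · intro hns
    by_contra hq
    obtain ⟨ρ, hρ⟩ := lemB n q φ hq
    exact hns ⟨ρ, fun σ _ => hρ σ⟩

end QBF
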